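/- arXiv:1710.06382 — 2 statements merged into one kernel-verified Lean document; each statement's English description precedes it below -/
import Mathlib

section
/- In the quadratic-loss SGD model, the region where the Pflug statistic decreases in expectation is {θ : (θ − θ*)ᵀ(V² − γM)(θ − θ*) < γσ² tr(V²)}, i.e., Δ(θ) < 0 exactly on this set, where Δ(θ) = E[∇ℓ_{n+1}ᵀ∇ℓ_n | θ_{n−1} = θ], V = E[xxᵀ] and M = E[xxᵀVxxᵀ]. In particular Δ(θ*) = −γσ² tr(V²) < 0 (provided σ² > 0 and V ≠ 0), so this region is an open set containing θ*, and if V² − γM is positive definite it is a nonempty open ellipsoid centered at θ*. -/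
/-!
Write `δ = θ - θ*` and `s = xᵀδ - ε`, so that the stochastic gradient is `s • x`.
Averaging the second gradient over the fresh sample `(x₂, ε₂)` gives `V (θ' - θ*)` with
`θ' - θ* = δ - γ s x₁`, hence `Δ(θ) = E[s δᵀV x₁ - γ s² x₁ᵀV x₁]`. Averaging over `ε₁`
(`E s = x₁ᵀδ`, `E s² = (x₁ᵀδ)² + σ²`) and then over `x₁` yields the closed form
`Δ(θ) = δᵀ(V² - γM)δ - γσ² tr(V²)`. The rest is about this quadratic form: it is continuous
and even in `δ`, `tr(V²) = ‖V‖²_F > 0` for the symmetric `V ≠ 0`, and positive definiteness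
gives a lower bound `m ‖δ‖²`, which makes the sublevel set bounded.
-/

open MeasureTheory Matrix

theorem integrable_of_integrable_sq {α : Type*} [MeasurableSpace α] {μ : Measure α}
    [IsFiniteMeasure μ] {f : α → ℝ} (hf : AEStronglyMeasurable f μ)
    (hf2 : Integrable (fun x => f x ^ 2) μ) : Integrable f μ :=
  ((memLp_two_iff_integrable_sq hf).2 hf2).integrable one_le_two

theorem integrable_sum_sum_mul {α κ : Type*} [MeasurableSpace α] {μ : Measure α} [Fintype κ]
    (c : κ → κ → ℝ) {f : κ → κ → α → ℝ} (hf : ∀ i j, Integrable (f i j) μ) :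
    Integrable (fun x => ∑ i, ∑ j, c i j * f i j x) μ :=
  integrable_finsetSum _ fun i _ => integrable_finsetSum _ fun j _ => (hf i j).const_mul _

theorem integral_sum_sum_mul {α κ : Type*} [MeasurableSpace α] {μ : Measure α} [Fintype κ]
    (c : κ → κ → ℝ) {f : κ → κ → α → ℝ} (hf : ∀ i j, Integrable (f i j) μ) :
    ∫ x, ∑ i, ∑ j, c i j * f i j x ∂μ = ∑ i, ∑ j, c i j * ∫ x, f i j x ∂μ := by
  rw [integral_finsetSum _ fun i _ => integrable_finsetSum _ fun j _ => (hf i j).const_mul _]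
  simp_rw [integral_finsetSum _ fun j _ => (hf _ j).const_mul _, integral_const_mul]

section Noise

variable {με : Measure ℝ} [IsProbabilityMeasure με]

theorem integral_sub_mul_of_mean_zero (hε : Integrable (fun e : ℝ => e) με)
    (hmean : ∫ e, e ∂με = 0) (a b : ℝ) : ∫ e, (a - e) * b ∂με = a * b := by
  simp_rw [sub_mul]
  rw [integral_sub (integrable_const _) (hε.mul_const b), integral_mul_const b fun e => e, hmean]
  simp

theorem integral_sub_mul_add_sub_sq_mul_of_mean_zero {σ2 : ℝ}
    (hε2 : Integrable (fun e : ℝ => e ^ 2) με) (hmean : ∫ e, e ∂με = 0)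
    (hvar : ∫ e, e ^ 2 ∂με = σ2) (a b c : ℝ) :
    ∫ e, ((a - e) * b + (a - e) ^ 2 * c) ∂με = a * b + (a ^ 2 + σ2) * c := by
  have hε : Integrable (fun e : ℝ => e) με := integrable_of_integrable_sq (by fun_prop) hε2
  have hexpand : ∀ e : ℝ, (a - e) * b + (a - e) ^ 2 * c
      = (a - e) * (b + 2 * a * c) + (e ^ 2 * c - a ^ 2 * c) := fun e => by ring
  simp_rw [hexpand]
  rw [integral_add, integral_sub_mul_of_mean_zero hε hmean, integral_sub, integral_mul_const,
    hvar, integral_const]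
  · simp only [probReal_univ, smul_eq_mul, one_mul]
    ring
  · exact hε2.mul_const c
  · exact integrable_const _
  · exact ((integrable_const a).sub hε).mul_const _
  · exact (hε2.mul_const c).sub (integrable_const _)

end Noise

section Moments

variable {ι : Type*} [Fintype ι] {μ : Measure (ι → ℝ)}

theorem dotProduct_mul_dotProduct_mul_eq_sum (x u v : ι → ℝ) (c : ℝ) :
    (x ⬝ᵥ u) * (x ⬝ᵥ v) * c = ∑ i, ∑ j, u i * v j * (x i * x j * c) := by
  simp_rw [dotProduct, Finset.sum_mul_sum, Finset.sum_mul]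
  exact Finset.sum_congr rfl fun i _ => Finset.sum_congr rfl fun j _ => by ring

theorem dotProduct_mulVec_self_eq_sum (A : Matrix ι ι ℝ) (x : ι → ℝ) :
    x ⬝ᵥ (A *ᵥ x) = ∑ i, ∑ j, A i j * (x i * x j) := by
  simp_rw [dotProduct, mulVec, dotProduct, Finset.mul_sum]
  exact Finset.sum_congr rfl fun i _ => Finset.sum_congr rfl fun j _ => by ring

theorem integrable_dotProduct_mul_dotProduct_mul {w : (ι → ℝ) → ℝ}
    (hw : ∀ i j, Integrable (fun x => x i * x j * w x) μ) (u v : ι → ℝ) :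
    Integrable (fun x => (x ⬝ᵥ u) * (x ⬝ᵥ v) * w x) μ := by
  simp_rw [dotProduct_mul_dotProduct_mul_eq_sum]
  exact integrable_sum_sum_mul _ hw

theorem integral_dotProduct_mul_dotProduct_mul {w : (ι → ℝ) → ℝ} {A : Matrix ι ι ℝ}
    (hA : ∀ i j, A i j = ∫ x, x i * x j * w x ∂μ)
    (hw : ∀ i j, Integrable (fun x => x i * x j * w x) μ) (u v : ι → ℝ) :
    ∫ x, (x ⬝ᵥ u) * (x ⬝ᵥ v) * w x ∂μ = u ⬝ᵥ (A *ᵥ v) := by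
  simp_rw [dotProduct_mul_dotProduct_mul_eq_sum, integral_sum_sum_mul _ hw, ← hA, dotProduct,
    mulVec, dotProduct, Finset.mul_sum]
  exact Finset.sum_congr rfl fun i _ => Finset.sum_congr rfl fun j _ => by ring

theorem integral_dotProduct_mul_dotProduct {A : Matrix ι ι ℝ}
    (hA : ∀ i j, A i j = ∫ x, x i * x j ∂μ)
    (h2 : ∀ i j, Integrable (fun x => x i * x j) μ) (u v : ι → ℝ) :
    ∫ x, (x ⬝ᵥ u) * (x ⬝ᵥ v) ∂μ = u ⬝ᵥ (A *ᵥ v) := by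
  simpa using integral_dotProduct_mul_dotProduct_mul (w := fun _ => 1) (by simpa using hA)
    (by simpa using h2) u v

theorem integrable_dotProduct_mul_dotProduct
    (h2 : ∀ i j, Integrable (fun x => x i * x j) μ) (u v : ι → ℝ) :
    Integrable (fun x => (x ⬝ᵥ u) * (x ⬝ᵥ v)) μ := by
  simpa using integrable_dotProduct_mul_dotProduct_mul (w := fun _ => 1) (by simpa using h2) u v

theorem integrable_dotProduct_mulVec_self (A : Matrix ι ι ℝ)
    (h2 : ∀ i j, Integrable (fun x => x i * x j) μ) :
    Integrable (fun x => x ⬝ᵥ (A *ᵥ x)) μ := by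
  simp_rw [dotProduct_mulVec_self_eq_sum]
  exact integrable_sum_sum_mul _ h2

theorem integral_dotProduct_mulVec_self {A V : Matrix ι ι ℝ}
    (hV : ∀ i j, V i j = ∫ x, x i * x j ∂μ)
    (h2 : ∀ i j, Integrable (fun x => x i * x j) μ) :
    ∫ x, x ⬝ᵥ (A *ᵥ x) ∂μ = trace (A * Vᵀ) := by
  simp_rw [dotProduct_mulVec_self_eq_sum, integral_sum_sum_mul (fun i j => A i j) h2, ← hV]
  rfl

theorem integrable_mul_mul_dotProduct_mulVec_self (A : Matrix ι ι ℝ)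
    (h4 : ∀ i j k l, Integrable (fun x => x i * x j * x k * x l) μ) (i j : ι) :
    Integrable (fun x => x i * x j * (x ⬝ᵥ (A *ᵥ x))) μ := by
  have hexpand : ∀ x : ι → ℝ, x i * x j * (x ⬝ᵥ (A *ᵥ x))
      = ∑ k, ∑ l, A k l * (x i * x j * x k * x l) := fun x => by
    rw [dotProduct_mulVec_self_eq_sum, Finset.mul_sum]
    exact Finset.sum_congr rfl fun k _ => by
      rw [Finset.mul_sum]
      exact Finset.sum_congr rfl fun l _ => by ring
  simp_rw [hexpand]
  exact integrable_sum_sum_mul _ (h4 i j)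

theorem integrable_mul_of_integrable_fourth [IsFiniteMeasure μ]
    (h4 : ∀ i j k l, Integrable (fun x => x i * x j * x k * x l) μ) (i j : ι) :
    Integrable (fun x => x i * x j) μ :=
  integrable_of_integrable_sq (by fun_prop) <|
    (h4 i j i j).congr (ae_of_all _ fun x => by ring)

omit [Fintype ι] in
theorem isSymm_of_eq_integral_mul {V : Matrix ι ι ℝ} (hV : ∀ i j, V i j = ∫ x, x i * x j ∂μ) :
    V.IsSymm :=
  IsSymm.ext fun i j => by simp only [hV, mul_comm]

end Moments

section QuadraticForm

variable {ι : Type*} [Fintype ι]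

theorem Matrix.IsSymm.trace_mul_self_pos {V : Matrix ι ι ℝ} (hV : V.IsSymm) (h : V ≠ 0) :
    0 < trace (V * V) := by
  have hVV : V * V = Vᴴ * V := by rw [conjTranspose_eq_transpose_of_trivial, hV.eq]
  rw [hVV]
  exact (posSemidef_conjTranspose_mul_self V).trace_nonneg.lt_of_ne'
    (trace_conjTranspose_mul_self_eq_zero_iff.not.2 h)

theorem smul_dotProduct_mulVec_smul (A : Matrix ι ι ℝ) (c : ℝ) (v : ι → ℝ) :
    (c • v) ⬝ᵥ (A *ᵥ (c • v)) = c ^ 2 * (v ⬝ᵥ (A *ᵥ v)) := by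
  rw [mulVec_smul, dotProduct_smul, smul_dotProduct, smul_eq_mul, smul_eq_mul]
  ring

theorem Matrix.PosDef.exists_pos_mul_norm_sq_le {A : Matrix ι ι ℝ} (hA : A.PosDef) :
    ∃ m > 0, ∀ v : ι → ℝ, m * ‖v‖ ^ 2 ≤ v ⬝ᵥ (A *ᵥ v) := by
  rcases isEmpty_or_nonempty ι with hι | hι
  · exact ⟨1, one_pos, fun v => by simp [Subsingleton.elim v 0]⟩
  obtain ⟨w, hw, hmin⟩ := (isCompact_sphere (0 : ι → ℝ) 1).exists_isMinOn
    (NormedSpace.sphere_nonempty.2 zero_le_one)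
    (Continuous.continuousOn (f := fun v : ι → ℝ => v ⬝ᵥ (A *ᵥ v)) (by fun_prop))
  refine ⟨w ⬝ᵥ (A *ᵥ w), hA.dotProduct_mulVec_pos (ne_zero_of_mem_unit_sphere ⟨w, hw⟩), ?_⟩
  intro v
  rcases eq_or_ne v 0 with rfl | hv
  · simp
  have hnv : ‖v‖ ≠ 0 := norm_ne_zero_iff.2 hv
  have hvS : ‖v‖⁻¹ • v ∈ Metric.sphere (0 : ι → ℝ) 1 := by
    simp [norm_smul, hnv]
  calc w ⬝ᵥ (A *ᵥ w) * ‖v‖ ^ 2 ≤ (‖v‖⁻¹ • v) ⬝ᵥ (A *ᵥ (‖v‖⁻¹ • v)) * ‖v‖ ^ 2 := by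
        gcongr; exact hmin hvS
    _ = v ⬝ᵥ (A *ᵥ v) := by
        rw [smul_dotProduct_mulVec_smul]; field_simp

theorem Matrix.PosDef.isBounded_setOf_dotProduct_mulVec_sub_lt {A : Matrix ι ι ℝ}
    (hA : A.PosDef) (c : ι → ℝ) (r : ℝ) :
    Bornology.IsBounded {θ | (θ - c) ⬝ᵥ (A *ᵥ (θ - c)) < r} := by
  obtain ⟨m, hm, hcoer⟩ := hA.exists_pos_mul_norm_sq_le
  refine (Metric.isBounded_closedBall (x := c) (r := √(r / m))).subset
    fun θ (hθ : (θ - c) ⬝ᵥ (A *ᵥ (θ - c)) < r) => ?_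
  rw [Metric.mem_closedBall, dist_eq_norm, ← Real.sqrt_sq (norm_nonneg _)]
  refine Real.sqrt_le_sqrt ((le_div_iff₀ hm).2 ?_)
  linarith [hcoer (θ - c), hθ]

end QuadraticForm

section SGD

variable {ι : Type*} [Fintype ι]

def quadLossGrad (θstar θ x : ι → ℝ) (e : ℝ) : ι → ℝ :=
  -(((x ⬝ᵥ θstar + e) - x ⬝ᵥ θ) • x)

theorem quadLossGrad_eq (θstar θ x : ι → ℝ) (e : ℝ) :
    quadLossGrad θstar θ x e = (x ⬝ᵥ (θ - θstar) - e) • x := by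
  rw [quadLossGrad, dotProduct_sub, ← neg_smul]
  congr 1
  ring

noncomputable def pflugDelta (μx : Measure (ι → ℝ)) (με : Measure ℝ) (θstar : ι → ℝ) (γ : ℝ)
    (θ : ι → ℝ) : ℝ :=
  ∫ x₁, ∫ e₁, ∫ x₂, ∫ e₂,
    quadLossGrad θstar (θ - γ • quadLossGrad θstar θ x₁ e₁) x₂ e₂ ⬝ᵥ
      quadLossGrad θstar θ x₁ e₁ ∂με ∂μx ∂με ∂μx

variable {μx : Measure (ι → ℝ)} {με : Measure ℝ} [IsProbabilityMeasure με]
  {θstar : ι → ℝ} {V : Matrix ι ι ℝ}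

theorem integral_integral_quadLossGrad_dotProduct (hε : Integrable (fun e : ℝ => e) με)
    (hmean : ∫ e, e ∂με = 0) (hV : ∀ i j, V i j = ∫ x, x i * x j ∂μx)
    (h2 : ∀ i j, Integrable (fun x : ι → ℝ => x i * x j) μx) (θ v : ι → ℝ) :
    ∫ x, ∫ e, quadLossGrad θstar θ x e ⬝ᵥ v ∂με ∂μx = (θ - θstar) ⬝ᵥ (V *ᵥ v) := by
  simp_rw [quadLossGrad_eq, smul_dotProduct, smul_eq_mul,
    integral_sub_mul_of_mean_zero hε hmean]
  exact integral_dotProduct_mul_dotProduct hV h2 _ _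

theorem pflugDelta_eq [IsProbabilityMeasure μx] {γ σ2 : ℝ} {M : Matrix ι ι ℝ}
    (hε2 : Integrable (fun e : ℝ => e ^ 2) με)
    (hmean : ∫ e, e ∂με = 0) (hvar : ∫ e, e ^ 2 ∂με = σ2)
    (h4 : ∀ i j k l, Integrable (fun x : ι → ℝ => x i * x j * x k * x l) μx)
    (hV : ∀ i j, V i j = ∫ x, x i * x j ∂μx)
    (hM : ∀ i j, M i j = ∫ x, x i * x j * (x ⬝ᵥ (V *ᵥ x)) ∂μx) (θ : ι → ℝ) :
    pflugDelta μx με θstar γ θ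
      = (θ - θstar) ⬝ᵥ ((V * V - γ • M) *ᵥ (θ - θstar)) - γ * σ2 * trace (V * V) := by
  have hε : Integrable (fun e : ℝ => e) με := integrable_of_integrable_sq (by fun_prop) hε2
  have h2 := integrable_mul_of_integrable_fourth h4
  have hVt : Vᵀ = V := (isSymm_of_eq_integral_mul hV).eq
  set δ := θ - θstar
  have hfirst : ∀ x e, (θ - γ • quadLossGrad θstar θ x e - θstar) ⬝ᵥ
      (V *ᵥ quadLossGrad θstar θ x e)
        = (x ⬝ᵥ δ - e) * (x ⬝ᵥ (V *ᵥ δ)) + (x ⬝ᵥ δ - e) ^ 2 * (-γ * (x ⬝ᵥ (V *ᵥ x))) := by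
    intro x e
    have hδ : δ ⬝ᵥ (V *ᵥ x) = x ⬝ᵥ (V *ᵥ δ) := by
      rw [dotProduct_mulVec, ← hVt, vecMul_transpose, dotProduct_comm, hVt]
    rw [sub_right_comm, quadLossGrad_eq, smul_smul, mulVec_smul, sub_dotProduct, dotProduct_smul,
      smul_dotProduct, dotProduct_smul, hδ, smul_eq_mul, smul_eq_mul, smul_eq_mul]
    ring
  have hsecond : ∀ x : ι → ℝ,
      x ⬝ᵥ δ * (x ⬝ᵥ (V *ᵥ δ)) + ((x ⬝ᵥ δ) ^ 2 + σ2) * (-γ * (x ⬝ᵥ (V *ᵥ x)))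
        = x ⬝ᵥ δ * (x ⬝ᵥ (V *ᵥ δ))
          + (-γ * ((x ⬝ᵥ δ) * (x ⬝ᵥ δ) * (x ⬝ᵥ (V *ᵥ x))) + -γ * σ2 * (x ⬝ᵥ (V *ᵥ x))) :=
    fun x => by ring
  rw [pflugDelta]
  simp_rw [integral_integral_quadLossGrad_dotProduct hε hmean hV h2, hfirst,
    integral_sub_mul_add_sub_sq_mul_of_mean_zero hε2 hmean hvar, hsecond]
  have hM4 := integrable_mul_mul_dotProduct_mulVec_self V h4
  rw [integral_add, integral_add, integral_const_mul, integral_const_mul,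
    integral_dotProduct_mul_dotProduct hV h2, integral_dotProduct_mul_dotProduct_mul hM hM4,
    integral_dotProduct_mulVec_self hV h2, hVt, mulVec_mulVec, sub_mulVec, dotProduct_sub,
    smul_mulVec, dotProduct_smul, smul_eq_mul]
  · ring
  · exact (integrable_dotProduct_mul_dotProduct_mul hM4 δ δ).const_mul _
  · exact (integrable_dotProduct_mulVec_self V h2).const_mul _
  · exact integrable_dotProduct_mul_dotProduct h2 δ (V *ᵥ δ)
  · exact ((integrable_dotProduct_mul_dotProduct_mul hM4 δ δ).const_mul _).add
      ((integrable_dotProduct_mulVec_self V h2).const_mul _)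

end SGD

/-- Quadratic-loss SGD as in Statement 2.  The region where the
Pflug statistic decreases in expectation is exactly
`{θ : (θ-θ*)ᵀ(V² - γM)(θ-θ*) < γ σ² tr(V²)}`; moreover
`Δ(θ*) = -γ σ² tr(V²) < 0` (provided `σ² > 0` and `V ≠ 0`), so the region is an
open set containing `θ*`, and if `V² - γM` is positive definite it is a
nonempty open ellipsoid centered at `θ*` (in particular, symmetric about
`θ*`). -/
theorem pflug_region_quadratic
    (p : ℕ) (μx : Measure (Fin p → ℝ)) (με : Measure ℝ)
    [IsProbabilityMeasure μx] [IsProbabilityMeasure με]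
    (θstar : Fin p → ℝ) (γ σ2 : ℝ) (hγ : 0 < γ)
    (hmean : ∫ e, e ∂με = 0) (hvar : ∫ e, e ^ 2 ∂με = σ2)
    (hεint : Integrable (fun e : ℝ => e ^ 2) με)
    (hfourth : ∀ i j k l : Fin p,
      Integrable (fun x : Fin p → ℝ => x i * x j * x k * x l) μx)
    (V M : Matrix (Fin p) (Fin p) ℝ)
    (hV : ∀ i j, V i j = ∫ x, x i * x j ∂μx)
    (hM : ∀ i j, M i j = ∫ x, x i * x j * (x ⬝ᵥ (V *ᵥ x)) ∂μx)
    -- gradient of the quadratic loss: ∇ℓ = -(y - xᵀθ) x with y = xᵀθ* + e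
    (g : (Fin p → ℝ) → (Fin p → ℝ) → ℝ → Fin p → ℝ)
    (hg : ∀ θ x e, g θ x e = -(((x ⬝ᵥ θstar + e) - x ⬝ᵥ θ) • x))
    -- Δ(θ) = E[∇ℓ_{n+1}ᵀ∇ℓ_n | θ_{n-1} = θ], with θ_n = θ - γ ∇ℓ_n
    (Δ : (Fin p → ℝ) → ℝ)
    (hΔ : ∀ θ, Δ θ = ∫ x₁, ∫ e₁, ∫ x₂, ∫ e₂,
      g (θ - γ • g θ x₁ e₁) x₂ e₂ ⬝ᵥ g θ x₁ e₁ ∂με ∂μx ∂με ∂μx) :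
    -- the region where the diagnostic decreases in expectation
    {θ : Fin p → ℝ | Δ θ < 0}
      = {θ : Fin p → ℝ |
          (θ - θstar) ⬝ᵥ ((V * V - γ • M) *ᵥ (θ - θstar))
            < γ * σ2 * Matrix.trace (V * V)} ∧
    -- value at the truth
    Δ θstar = -(γ * σ2 * Matrix.trace (V * V)) ∧
    (0 < σ2 → V ≠ 0 → Δ θstar < 0) ∧
    -- it is an open set, containing θ* when σ² > 0 and V ≠ 0
    IsOpen {θ : Fin p → ℝ | Δ θ < 0} ∧
    (0 < σ2 → V ≠ 0 → θstar ∈ {θ : Fin p → ℝ | Δ θ < 0}) ∧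
    -- a nonempty (open) ellipsoid centered at θ* when V² - γM is pos. def.
    ((V * V - γ • M).PosDef → 0 < σ2 → V ≠ 0 →
      Set.Nonempty {θ : Fin p → ℝ | Δ θ < 0} ∧
      Bornology.IsBounded {θ : Fin p → ℝ | Δ θ < 0} ∧
      (∀ v : Fin p → ℝ,
        θstar + v ∈ {θ : Fin p → ℝ | Δ θ < 0}
          ↔ θstar - v ∈ {θ : Fin p → ℝ | Δ θ < 0})) := by
  obtain rfl : g = quadLossGrad θstar := funext fun θ => funext fun x => funext (hg θ x)
  have hΔeq : ∀ θ, Δ θ = (θ - θstar) ⬝ᵥ ((V * V - γ • M) *ᵥ (θ - θstar))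
      - γ * σ2 * trace (V * V) := fun θ =>
    (hΔ θ).trans (pflugDelta_eq hεint hmean hvar hfourth hV hM θ)
  have hmem : ∀ θ, Δ θ < 0 ↔ (θ - θstar) ⬝ᵥ ((V * V - γ • M) *ᵥ (θ - θstar))
      < γ * σ2 * trace (V * V) := fun θ => by rw [hΔeq, sub_neg]
  have hregion : {θ | Δ θ < 0} = {θ | (θ - θstar) ⬝ᵥ ((V * V - γ • M) *ᵥ (θ - θstar))
      < γ * σ2 * trace (V * V)} := Set.ext hmem
  have hΔstar : Δ θstar = -(γ * σ2 * trace (V * V)) := by simp [hΔeq]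
  have hΔstar_neg (hσ : 0 < σ2) (hV0 : V ≠ 0) : Δ θstar < 0 := by
    rw [hΔstar, neg_lt_zero]
    exact mul_pos (mul_pos hγ hσ) ((isSymm_of_eq_integral_mul hV).trace_mul_self_pos hV0)
  refine ⟨hregion, hΔstar, hΔstar_neg, ?_, hΔstar_neg,
    fun hA hσ hV0 => ⟨⟨θstar, hΔstar_neg hσ hV0⟩, ?_, fun v => ?_⟩⟩
  · rw [hregion]
    exact isOpen_lt (by fun_prop) continuous_const
  · rw [hregion]
    exact hA.isBounded_setOf_dotProduct_mulVec_sub_lt θstar _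
  · change Δ (θstar + v) < 0 ↔ Δ (θstar - v) < 0
    rw [hmem, hmem, add_sub_cancel_left, sub_sub_cancel_left, mulVec_neg, dotProduct_neg,
      neg_dotProduct, neg_neg]
end

section
/- In the one-dimensional model y_n = θ* + ε_n, the implicit SGD update is θ_n = (θ_{n−1} + γ y_n)/(1 + γ), and the conditional expected increment of the Pflug statistic built from implicit gradients is Δ^im(θ) = E[g_{n+1} g_n | θ_{n−1} = θ] = (1+γ)^{-3} ((θ − θ*)² − γσ²). Hence for every learning rate γ > 0, Δ^im(θ) < 0 if and only if (θ − θ*)² < γσ², so the diagnostic region is the interval of radius σ√γ around θ* regardless of γ. -/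
/-!
The implicit gradient is `(θ - θ* - ε)/(1+γ)`, affine in the noise. Integrating out the second
noise leaves `(θ₁ - θ*)/(1+γ)` with `θ₁ - θ* = (θ - θ* + γ ε₁)/(1+γ)`, so the increment is
`E[(θ - θ* + γ ε₁)(θ - θ* - ε₁)] / (1+γ)³`; the cross term vanishes and `-γ ε₁²` contributes
`-γ σ²`. The sign is then that of `(θ - θ*)² - γ σ²`.
-/

open MeasureTheory

section Moments

variable {ν : Measure ℝ} [IsProbabilityMeasure ν]

lemma integral_affine (hint1 : Integrable (fun e : ℝ => e) ν) (a b : ℝ) :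
    ∫ e, a + b * e ∂ν = a + b * ∫ e, e ∂ν := by
  rw [integral_add (integrable_const a) (hint1.const_mul b), integral_const, integral_const_mul,
    probReal_univ, one_smul]

lemma integral_quadratic (hint1 : Integrable (fun e : ℝ => e) ν)
    (hint2 : Integrable (fun e : ℝ => e ^ 2) ν) (a b c : ℝ) :
    ∫ e, a + b * e + c * e ^ 2 ∂ν = a + b * ∫ e, e ∂ν + c * ∫ e, e ^ 2 ∂ν := by
  rw [integral_add (f := fun e => a + b * e) ((integrable_const a).add (hint1.const_mul b)) (hint2.const_mul c),
    integral_affine hint1, integral_const_mul]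

end Moments

section ImplicitSGD

variable (γ θstar : ℝ)

noncomputable def implicitStep (θ e : ℝ) : ℝ := (θ + γ * (θstar + e)) / (1 + γ)

noncomputable def implicitGrad (θ e : ℝ) : ℝ := (θ - implicitStep γ θstar θ e) / γ

noncomputable def pflugIncrement (ν : Measure ℝ) (θ : ℝ) : ℝ :=
  ∫ e₁, ∫ e₂, implicitGrad γ θstar (implicitStep γ θstar θ e₁) e₂ * implicitGrad γ θstar θ e₁ ∂ν ∂ν

variable {γ}

lemma implicitStep_sub (hγ : 1 + γ ≠ 0) (θ e : ℝ) :
    implicitStep γ θstar θ e - θstar = (θ - θstar + γ * e) / (1 + γ) := by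
  unfold implicitStep
  field_simp
  ring

lemma implicitGrad_eq (hγ : 0 < γ) (θ e : ℝ) :
    implicitGrad γ θstar θ e = (θ - θstar - e) / (1 + γ) := by
  unfold implicitGrad implicitStep
  field_simp
  ring

variable {ν : Measure ℝ} [IsProbabilityMeasure ν]

lemma integral_implicitGrad_mul (hγ : 0 < γ) (hint1 : Integrable (fun e : ℝ => e) ν)
    (hmean : ∫ e, e ∂ν = 0) (θ₁ c : ℝ) :
    ∫ e, implicitGrad γ θstar θ₁ e * c ∂ν = (θ₁ - θstar) / (1 + γ) * c := by
  have haffine : ∀ e, implicitGrad γ θstar θ₁ e * c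
      = (θ₁ - θstar) / (1 + γ) * c + (-c / (1 + γ)) * e := by
    intro e
    rw [implicitGrad_eq θstar hγ]
    ring
  simp_rw [haffine]
  rw [integral_affine hint1, hmean, mul_zero, add_zero]

lemma pflugIncrement_eq (hγ : 0 < γ) (hint1 : Integrable (fun e : ℝ => e) ν)
    (hint2 : Integrable (fun e : ℝ => e ^ 2) ν) (hmean : ∫ e, e ∂ν = 0) (θ : ℝ) :
    pflugIncrement γ θstar ν θ = ((θ - θstar) ^ 2 - γ * ∫ e, e ^ 2 ∂ν) / (1 + γ) ^ 3 := by
  have hγ₁ : 1 + γ ≠ 0 := by positivity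
  have hquadratic : ∀ e, (implicitStep γ θstar θ e - θstar) / (1 + γ) * implicitGrad γ θstar θ e
      = (θ - θstar) ^ 2 / (1 + γ) ^ 3 + ((γ - 1) * (θ - θstar) / (1 + γ) ^ 3) * e
        + (-γ / (1 + γ) ^ 3) * e ^ 2 := by
    intro e
    rw [implicitStep_sub θstar hγ₁, implicitGrad_eq θstar hγ]
    field_simp
    ring
  simp_rw [pflugIncrement, integral_implicitGrad_mul θstar hγ hint1 hmean, hquadratic]
  rw [integral_quadratic hint1 hint2, hmean]
  field_simp
  ring

end ImplicitSGD

theorem pflug_diagnostic_one_dim_implicit_general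
    (ν : Measure ℝ) [IsProbabilityMeasure ν]
    (θstar σ2 γ : ℝ) (hγ : 0 < γ)
    (hmean : ∫ e, e ∂ν = 0) (hvar : ∫ e, e ^ 2 ∂ν = σ2)
    (hint1 : Integrable (fun e : ℝ => e) ν)
    (hint2 : Integrable (fun e : ℝ => e ^ 2) ν)
    -- the implicit update: θ₁(θ,e) = (θ + γ(θ*+e))/(1+γ)
    (step : ℝ → ℝ → ℝ) (hstep : ∀ θ e, step θ e = (θ + γ * (θstar + e)) / (1 + γ))
    -- Δ^im(θ) = E[g₂ g₁], g₁ = (θ - θ₁)/γ, g₂ = (θ₁ - θ₂)/γ, θ₂ = step θ₁ e₂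
    (Δim : ℝ → ℝ)
    (hΔ : ∀ θ : ℝ, Δim θ =
      ∫ e₁, ∫ e₂,
        ((step θ e₁ - step (step θ e₁) e₂) / γ) * ((θ - step θ e₁) / γ) ∂ν ∂ν) :
    (∀ θ : ℝ, Δim θ = (1 + γ) ^ (-3 : ℤ) * ((θ - θstar) ^ 2 - γ * σ2)) ∧
    (∀ θ : ℝ, Δim θ < 0 ↔ (θ - θstar) ^ 2 < γ * σ2) := by
  obtain rfl : step = implicitStep γ θstar := funext fun θ => funext (hstep θ)
  have hΔim : Δim = pflugIncrement γ θstar ν := funext hΔ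
  have hformula : ∀ θ, Δim θ = (1 + γ) ^ (-3 : ℤ) * ((θ - θstar) ^ 2 - γ * σ2) := by
    intro θ
    rw [hΔim, pflugIncrement_eq θstar hγ hint1 hint2 hmean, hvar, zpow_neg, div_eq_inv_mul]
    norm_cast
  refine ⟨hformula, fun θ => ?_⟩
  have hscale : (0 : ℝ) < (1 + γ) ^ (-3 : ℤ) := by positivity
  rw [hformula]
  exact (smul_neg_iff_of_pos_left hscale).trans sub_neg

/-- One-dimensional model `y = θ* + ε`.  The implicit SGD
update is `θ_n = (θ_{n-1} + γ y_n)/(1+γ)`, with implicit gradient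
`g_n = (θ_{n-1} - θ_n)/γ`.  Conditional on `θ_{n-1} = θ`, with two fresh
i.i.d. noises, the expected Pflug increment is
`Δ^im(θ) = E[g_{n+1} g_n | θ_{n-1} = θ] = (1+γ)⁻³ ((θ - θ*)² - γ σ²)`;
hence for every `γ > 0`, `Δ^im(θ) < 0 ↔ (θ - θ*)² < γ σ²`. -/
theorem pflug_diagnostic_one_dim_implicit
    (ν : Measure ℝ) [IsProbabilityMeasure ν]
    (θstar σ2 γ : ℝ) (hγ : 0 < γ) (hσ2 : 0 < σ2)
    (hmean : ∫ e, e ∂ν = 0) (hvar : ∫ e, e ^ 2 ∂ν = σ2)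
    (hint1 : Integrable (fun e : ℝ => e) ν)
    (hint2 : Integrable (fun e : ℝ => e ^ 2) ν)
    -- the implicit update: θ₁(θ,e) = (θ + γ(θ*+e))/(1+γ)
    (step : ℝ → ℝ → ℝ) (hstep : ∀ θ e, step θ e = (θ + γ * (θstar + e)) / (1 + γ))
    -- Δ^im(θ) = E[g₂ g₁], g₁ = (θ - θ₁)/γ, g₂ = (θ₁ - θ₂)/γ, θ₂ = step θ₁ e₂
    (Δim : ℝ → ℝ)
    (hΔ : ∀ θ : ℝ, Δim θ =
      ∫ e₁, ∫ e₂,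
        ((step θ e₁ - step (step θ e₁) e₂) / γ) * ((θ - step θ e₁) / γ) ∂ν ∂ν) :
    (∀ θ : ℝ, Δim θ = (1 + γ) ^ (-3 : ℤ) * ((θ - θstar) ^ 2 - γ * σ2)) ∧
    (∀ θ : ℝ, Δim θ < 0 ↔ (θ - θstar) ^ 2 < γ * σ2) :=
  pflug_diagnostic_one_dim_implicit_general ν θstar σ2 γ hγ hmean hvar hint1 hint2 step hstep Δim hΔ
end
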